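/- arXiv:1404.0336 — 3 statements merged into one kernel-verified Lean document; each statement's English description precedes it below -/
import Mathlib

section
/- (Potts reduction) Given a Potts instance with labels L, data terms D_L ≥ 0 and smoothness S(x), construct the flat hierarchy (root S with all labels as leaf children), set D_S = 0, smoothness S_L = S at leaves and 0 at the root. Then a leaf labeling u is feasible and optimal for the Potts energy if and only if its extension (with u_S = 1) is feasible and optimal for the GHMF energy, and the two optimal energies are equal. -/
/-!
Extending a labeling by the root value `1` and restricting to the leaves are mutually inverse
maps between the Potts feasible set and the GHMF feasible set of the flat hierarchy: the root
constraint `u_S = 1 = Σ_L u_L` is exactly the simplex constraint. Since the root contributes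
nothing to the GHMF energy, that energy is the Potts energy of the restriction, so both problems
have the same set of energy values and corresponding minimizers.
-/

open Set Function

section Transfer

variable {α β γ : Type*} {s : Set α} {t : Set β} {f : α → β} {g : β → α}

theorem Set.image_comp_eq_of_leftInverse_of_mapsTo (E : α → γ) (hgf : LeftInverse g f)
    (hf : MapsTo f s t) (hg : MapsTo g t s) : (E ∘ g) '' t = E '' s := by
  rw [image_comp, ((hgf.leftInvOn s).surjOn hf).image_eq_of_mapsTo hg]

theorem Function.LeftInverse.mem_iff_of_mapsTo (hgf : LeftInverse g f) (hf : MapsTo f s t)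
    (hg : MapsTo g t s) {a : α} : f a ∈ t ↔ a ∈ s :=
  ⟨fun h => hgf a ▸ hg h, fun h => hf h⟩

theorem Function.LeftInverse.forall_le_comp_iff_of_mapsTo [LE γ] (E : α → γ)
    (hgf : LeftInverse g f) (hf : MapsTo f s t) (hg : MapsTo g t s) (a : α) :
    (∀ b ∈ t, (E ∘ g) (f a) ≤ (E ∘ g) b) ↔ ∀ x ∈ s, E a ≤ E x := by
  rw [comp_apply, hgf a]
  calc (∀ b ∈ t, E a ≤ (E ∘ g) b) ↔ ∀ y ∈ (E ∘ g) '' t, E a ≤ y := forall_mem_image.symm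
    _ ↔ ∀ y ∈ E '' s, E a ≤ y := by rw [image_comp_eq_of_leftInverse_of_mapsTo E hgf hf hg]
    _ ↔ ∀ x ∈ s, E a ≤ E x := forall_mem_image

end Transfer

/-- `none` is the root of the flat hierarchy and `some L` the leaf of label `L`; `TVS` is the
fixed weighted total-variation term `u ↦ Σ_x S(x)|∇u(x)|`. -/
theorem potts_reduction_general {Ω Labels : Type} [Fintype Ω] [Fintype Labels]
    (D : Labels → Ω → ℝ)
    (TVS : (Ω → ℝ) → ℝ) :
    let PottsSet : Set (Labels → Ω → ℝ) :=
      {v | (∀ L x, 0 ≤ v L x) ∧ ∀ x, ∑ L, v L x = 1}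
    let GSet : Set (Option Labels → Ω → ℝ) :=
      {w | (∀ n x, 0 ≤ w n x) ∧ (∀ x, w none x = 1) ∧
        ∀ x, w none x = ∑ L, w (some L) x}
    let EP : (Labels → Ω → ℝ) → ℝ :=
      fun v => ∑ L, ((∑ x, D L x * v L x) + TVS (v L))
    let EG : (Option Labels → Ω → ℝ) → ℝ :=
      fun w => ((∑ x, (0 : ℝ) * w none x) + 0) +
        ∑ L, ((∑ x, D L x * w (some L) x) + TVS (fun x => w (some L) x))
    let ext : (Labels → Ω → ℝ) → (Option Labels → Ω → ℝ) :=
      fun v o x => o.elim 1 (fun L => v L x)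
    (∀ v, (v ∈ PottsSet ∧ ∀ w ∈ PottsSet, EP v ≤ EP w) ↔
      (ext v ∈ GSet ∧ ∀ w ∈ GSet, EG (ext v) ≤ EG w)) ∧
    sInf (EP '' PottsSet) = sInf (EG '' GSet) := by
  intro PottsSet GSet EP EG ext
  let res : (Option Labels → Ω → ℝ) → (Labels → Ω → ℝ) := fun w L => w (some L)
  have res_ext : LeftInverse res ext := fun _ => rfl
  have ext_mapsTo : MapsTo ext PottsSet GSet := by
    rintro v ⟨hnonneg, hsum⟩
    refine ⟨?_, fun _ => rfl, fun x => (hsum x).symm⟩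
    rintro (_ | L) x
    exacts [zero_le_one, hnonneg L x]
  have res_mapsTo : MapsTo res GSet PottsSet := by
    rintro w ⟨hnonneg, hroot, hsum⟩
    exact ⟨fun L => hnonneg (some L), fun x => by rw [← hsum x, hroot x]⟩
  have EG_eq : EG = EP ∘ res := funext fun w => by simp [EG, EP, res]
  rw [EG_eq]
  exact ⟨fun v => and_congr (res_ext.mem_iff_of_mapsTo ext_mapsTo res_mapsTo).symm
      (res_ext.forall_le_comp_iff_of_mapsTo EP ext_mapsTo res_mapsTo v).symm,
    congrArg sInf (image_comp_eq_of_leftInverse_of_mapsTo EP res_ext ext_mapsTo res_mapsTo).symm⟩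

/-- Potts reduction: with the flat hierarchy (root `none`, children `some L` all
leaves), data term `0` and smoothness `0` at the root, a leaf labeling is feasible
and optimal for the Potts energy iff its extension (with root value 1) is feasible
and optimal for the GHMF energy, and the two optimal energies are equal.
`TVS : (Ω → ℝ) → ℝ` is the fixed (S-weighted) discrete total-variation term
`u ↦ Σ_x S(x)|∇u(x)|`, identical in both formulations. -/
theorem potts_reduction {Ω Labels : Type} [Fintype Ω] [Fintype Labels]
    (D : Labels → Ω → ℝ) (hD : ∀ L x, 0 ≤ D L x)
    (TVS : (Ω → ℝ) → ℝ) :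
    let PottsSet : Set (Labels → Ω → ℝ) :=
      {v | (∀ L x, 0 ≤ v L x) ∧ ∀ x, ∑ L, v L x = 1}
    let GSet : Set (Option Labels → Ω → ℝ) :=
      {w | (∀ n x, 0 ≤ w n x) ∧ (∀ x, w none x = 1) ∧
        ∀ x, w none x = ∑ L, w (some L) x}
    let EP : (Labels → Ω → ℝ) → ℝ :=
      fun v => ∑ L, ((∑ x, D L x * v L x) + TVS (v L))
    let EG : (Option Labels → Ω → ℝ) → ℝ :=
      fun w => ((∑ x, (0 : ℝ) * w none x) + 0) +
        ∑ L, ((∑ x, D L x * w (some L) x) + TVS (fun x => w (some L) x))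
    let ext : (Labels → Ω → ℝ) → (Option Labels → Ω → ℝ) :=
      fun v o x => o.elim 1 (fun L => v L x)
    (∀ v, (v ∈ PottsSet ∧ ∀ w ∈ PottsSet, EP v ≤ EP w) ↔
      (ext v ∈ GSet ∧ ∀ w ∈ GSet, EG (ext v) ≤ EG w)) ∧
    sInf (EP '' PottsSet) = sInf (EG '' GSet) :=
  potts_reduction_general D TVS
end

section
/- The Ishikawa constraint set (1 = u_{L_0} ≥ u_{L_1} ≥ … ≥ u_{L_N} ≥ 0) is in bijection with the GHMF constraint set on the caterpillar hierarchy in which each L_i (0 ≤ i ≤ N−1) has two children L_{i+1} and leaf B_{i+1}, via u_{B_i} = u_{L_{i-1}} − u_{L_i}; the inverse map is u_{L_i} = u_{L_{i+1}} + u_{B_{i+1}} recovered from the leaf values. -/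
/-! The sum constraints of the caterpillar telescope along the spine, so every spine value is the
last one plus the leaves below it. Hence `g` inverts `f`, and under this correspondence the leaf
nonnegativity constraints are exactly the monotonicity constraints of the Ishikawa set. -/

open Finset in
theorem Fin.eq_last_add_sum_of_castSucc_eq_succ_add {M : Type*} [AddCommMonoid M] {n : ℕ}
    (u : Fin (n + 1) → M) (b : Fin n → M) (h : ∀ i : Fin n, u i.castSucc = u i.succ + b i)
    (i : Fin (n + 1)) :
    u i = u (Fin.last n) + ∑ j ∈ univ.filter (fun j : Fin n => (i : ℕ) ≤ (j : ℕ)), b j := by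
  induction i using Fin.reverseInduction with
  | last =>
    have hempty : univ.filter (fun j : Fin n => n ≤ (j : ℕ)) = ∅ :=
      filter_false_of_mem fun j _ => not_le.2 j.isLt
    simp [hempty]
  | cast i ih =>
    have hsplit : univ.filter (fun j : Fin n => (i.castSucc : ℕ) ≤ (j : ℕ)) =
        insert i (univ.filter (fun j : Fin n => (i.succ : ℕ) ≤ (j : ℕ))) := by
      ext j
      simp only [mem_filter, mem_univ, true_and, mem_insert, Fin.val_castSucc, Fin.val_succ,
        Fin.ext_iff]
      omega
    rw [hsplit, sum_insert (by simp), h i, ih]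
    abel

theorem ishikawa_caterpillar_bijection_general {Ω : Type} (N : ℕ) :
    let IshSet : Set (Fin (N + 1) → Ω → ℝ) :=
      {v | (∀ x, v 0 x = 1) ∧ (∀ i x, 0 ≤ v i x) ∧
        ∀ i : Fin N, ∀ x, v i.succ x ≤ v i.castSucc x}
    let GSet : Set ((Fin (N + 1) → Ω → ℝ) × (Fin N → Ω → ℝ)) :=
      {p | (∀ i x, 0 ≤ p.1 i x) ∧ (∀ i x, 0 ≤ p.2 i x) ∧
        (∀ x, p.1 0 x = 1) ∧
        ∀ i : Fin N, ∀ x, p.1 i.castSucc x = p.1 i.succ x + p.2 i x}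
    let f : (Fin (N + 1) → Ω → ℝ) → (Fin (N + 1) → Ω → ℝ) × (Fin N → Ω → ℝ) :=
      fun v => (v, fun i x => v i.castSucc x - v i.succ x)
    let g : (Fin (N + 1) → Ω → ℝ) × (Fin N → Ω → ℝ) → (Fin (N + 1) → Ω → ℝ) :=
      fun p i x => p.1 (Fin.last N) x +
        ∑ j ∈ Finset.univ.filter (fun j : Fin N => (i : ℕ) ≤ (j : ℕ)), p.2 j x
    Set.BijOn f IshSet GSet ∧ Set.InvOn g f IshSet GSet := by
  intro IshSet GSet f g
  have g_eq_fst {p} (hp : ∀ i : Fin N, ∀ x, p.1 i.castSucc x = p.1 i.succ x + p.2 i x) :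
      g p = p.1 := funext fun i => funext fun x =>
    (Fin.eq_last_add_sum_of_castSucc_eq_succ_add (p.1 · x) (p.2 · x) (hp · x) i).symm
  have hleft : Set.LeftInvOn g f IshSet := fun v _ =>
    g_eq_fst fun i x => (add_sub_cancel _ _).symm
  have hright : Set.RightInvOn g f GSet := by
    rintro p ⟨-, -, -, hsum⟩
    rw [g_eq_fst hsum]
    ext i x
    · rfl
    · exact sub_eq_of_eq_add' (hsum i x)
  have hmaps_f : Set.MapsTo f IshSet GSet := by
    rintro v ⟨hroot, hnonneg, hmono⟩
    exact ⟨hnonneg, fun i x => sub_nonneg.2 (hmono i x), hroot,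
      fun i x => (add_sub_cancel _ _).symm⟩
  have hmaps_g : Set.MapsTo g GSet IshSet := by
    rintro p ⟨hnonneg, hleaf, hroot, hsum⟩
    rw [g_eq_fst hsum]
    exact ⟨hroot, hnonneg, fun i x => (hsum i x).symm ▸ le_add_of_nonneg_right (hleaf i x)⟩
  exact ⟨Set.InvOn.bijOn ⟨hleft, hright⟩ hmaps_f hmaps_g, hleft, hright⟩

/-- The Ishikawa constraint set is in bijection with the GHMF constraint set on
the caterpillar hierarchy (each `L_i` has children `L_{i+1}` and leaf `B_{i+1}`),
via `u_{B_i} = u_{L_{i-1}} - u_{L_i}`; the inverse recovers `u_{L_i}` from the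
leaf values as `u_{L_N} + Σ_{j ≥ i} u_{B_{j+1}}`. -/
theorem ishikawa_caterpillar_bijection {Ω : Type} [Fintype Ω] (N : ℕ) (hN : 1 ≤ N) :
    let IshSet : Set (Fin (N + 1) → Ω → ℝ) :=
      {v | (∀ x, v 0 x = 1) ∧ (∀ i x, 0 ≤ v i x) ∧
        ∀ i : Fin N, ∀ x, v i.succ x ≤ v i.castSucc x}
    let GSet : Set ((Fin (N + 1) → Ω → ℝ) × (Fin N → Ω → ℝ)) :=
      {p | (∀ i x, 0 ≤ p.1 i x) ∧ (∀ i x, 0 ≤ p.2 i x) ∧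
        (∀ x, p.1 0 x = 1) ∧
        ∀ i : Fin N, ∀ x, p.1 i.castSucc x = p.1 i.succ x + p.2 i x}
    let f : (Fin (N + 1) → Ω → ℝ) → (Fin (N + 1) → Ω → ℝ) × (Fin N → Ω → ℝ) :=
      fun v => (v, fun i x => v i.castSucc x - v i.succ x)
    let g : (Fin (N + 1) → Ω → ℝ) × (Fin N → Ω → ℝ) → (Fin (N + 1) → Ω → ℝ) :=
      fun p i x => p.1 (Fin.last N) x +
        ∑ j ∈ Finset.univ.filter (fun j : Fin N => (i : ℕ) ≤ (j : ℕ)), p.2 j x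
    Set.BijOn f IshSet GSet ∧ Set.InvOn g f IshSet GSet :=
  ishikawa_caterpillar_bijection_general N
end

section
/- (Potts is a strict subclass) There exists a GHMF hierarchy instance (e.g., a three-level tree with a branch node having two leaf children alongside another leaf child of the root, with a nonzero smoothness weight on the branch) whose constraint set, projected to leaf labelings, strictly contains structure not expressible by any flat (Potts) hierarchy energy with per-leaf smoothness: formally, the GHMF energy includes the term S_B(x)|∇(u_{ℓ1} + u_{ℓ2})(x)| which is not of the form Σ_{leaves} S_L(x)|∇u_L(x)| for any choice of S_L, witnessed by a specific u where |∇(u_{ℓ1}+u_{ℓ2})| < |∇u_{ℓ1}| + |∇u_{ℓ2}|. -/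
lemma aux_abs_neg_add (a b : ℝ) : |-a + b| = |a - b| := by
  rw [show -a + b = -(a - b) by ring, abs_neg]

/-- Potts is a strict subclass: on a finite graph with at least one proper edge,
there exist leaf labelings `u, u'` (three leaves) agreeing edgewise in each
`|∇u_{ℓi}|` but differing in `|∇(u_{ℓ1} + u_{ℓ2})|`, with a witness edge where
`|∇(u_{ℓ1}+u_{ℓ2})| < |∇u_{ℓ1}| + |∇u_{ℓ2}|`; hence the hierarchical smoothness
term `Σ_e |∇(u_{ℓ1}+u_{ℓ2})(e)|` is not of the form `Σ_{leaves} Σ_e S_L(e)|∇u_L(e)|`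
for any choice of per-leaf weights `S_L`. -/
theorem potts_strict_subclass {V E : Type} [Fintype V] [Fintype E]
    (head tail : E → V) (he : ∃ e : E, head e ≠ tail e) :
    let grad : (V → ℝ) → E → ℝ := fun f e => f (head e) - f (tail e)
    ∃ u u' : Fin 3 → V → ℝ,
      (∀ i : Fin 3, ∀ e, |grad (u i) e| = |grad (u' i) e|) ∧
      (∃ e, |grad (fun v => u 0 v + u 1 v) e| ≠ |grad (fun v => u' 0 v + u' 1 v) e|) ∧
      (∃ e, |grad (fun v => u 0 v + u 1 v) e| < |grad (u 0) e| + |grad (u 1) e|) ∧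
      ∀ S : Fin 3 → E → ℝ,
        ¬ ∀ v : Fin 3 → V → ℝ,
            (∑ e, |grad (fun x => v 0 x + v 1 x) e|) =
              ∑ i : Fin 3, ∑ e, S i e * |grad (v i) e| := by
  intro grad
  classical
  obtain ⟨e₀, he₀⟩ := he
  set f : V → ℝ := fun v => if v = head e₀ then 1 else 0 with hf
  have hfh : f (head e₀) = 1 := by simp [hf]
  have hft : f (tail e₀) = 0 := by simp [hf, Ne.symm he₀]
  have hgf : grad f e₀ = 1 := by simp [grad, hfh, hft]
  refine ⟨![f, fun v => -f v, 0], ![f, f, 0], ?_, ?_, ?_, ?_⟩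
  · intro i e
    fin_cases i <;> simp [grad, aux_abs_neg_add]
  · refine ⟨e₀, ?_⟩
    simp only [Matrix.cons_val_zero, Matrix.cons_val_one, Matrix.head_cons]
    have h1 : |grad (fun v => f v + -f v) e₀| = 0 := by simp [grad]
    have h2 : |grad (fun v => f v + f v) e₀| = 2 := by
      simp only [grad, hfh, hft]; norm_num
    rw [h1, h2]; norm_num
  · refine ⟨e₀, ?_⟩
    simp only [Matrix.cons_val_zero, Matrix.cons_val_one, Matrix.head_cons]
    have h1 : |grad (fun v => f v + -f v) e₀| = 0 := by simp [grad]
    have h3 : |grad (fun v => -f v) e₀| = 1 := by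
      simp only [grad, hfh, hft]; norm_num
    rw [h1, h3, show |grad f e₀| = 1 by rw [hgf]; norm_num]
    norm_num
  · intro S h
    have hu := h ![f, fun v => -f v, 0]
    have hu' := h ![f, f, 0]
    have hrhs : (∑ i : Fin 3, ∑ e, S i e * |grad ((![f, fun v => -f v, (0:V→ℝ)]) i) e|)
        = ∑ i : Fin 3, ∑ e, S i e * |grad ((![f, f, (0:V→ℝ)]) i) e| := by
      refine Finset.sum_congr rfl fun i _ => Finset.sum_congr rfl fun e _ => ?_
      fin_cases i <;> simp [grad, aux_abs_neg_add]
    have hL1 : (∑ e, |grad (fun x => (![f, fun v => -f v, (0:V→ℝ)]) 0 x + (![f, fun v => -f v, (0:V→ℝ)]) 1 x) e|) = 0 := by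
      apply Finset.sum_eq_zero
      intro e _
      simp [grad]
    have hkey : (∑ e, |grad (fun x => (![f, f, (0:V→ℝ)]) 0 x + (![f, f, (0:V→ℝ)]) 1 x) e|) = 0 := by
      rw [hu', ← hrhs, ← hu, hL1]
    have hterm : |grad (fun x => (![f, f, (0:V→ℝ)]) 0 x + (![f, f, (0:V→ℝ)]) 1 x) e₀| = 2 := by
      simp only [Matrix.cons_val_zero, Matrix.cons_val_one, Matrix.head_cons, grad, hfh, hft]
      norm_num
    have hle := Finset.single_le_sum
      (f := fun e => |grad (fun x => (![f, f, (0:V→ℝ)]) 0 x + (![f, f, (0:V→ℝ)]) 1 x) e|)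
      (fun e _ => abs_nonneg _) (Finset.mem_univ e₀)
    simp only [hterm, hkey] at hle
    linarith
end
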